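/- Let M be the 8×8 matrix over Z[q] given in the paper for Z'(holed torus) in the AGL₁ case. Then M = P·D·P⁻¹ where D = diag(1, q², q², q², q², (q−1)², q(q²−2q+2), q²(q−1)²) and P is the explicit matrix given in the paper; in particular M has eigenvalues 1, q², (q−1)², q(q²−2q+2), and q²(q−1)². -/

import Mathlib

/-- The variable `q`, viewed in the field of rational functions `ℚ(q)`. -/
noncomputable def qr : RatFunc ℚ := RatFunc.X

/-- The 8×8 matrix of `Z'(holed torus)` for `AGL₁(k)`, over `ℚ(q)`. -/
noncomputable def M8 : Matrix (Fin 8) (Fin 8) (RatFunc ℚ) :=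
  !![1, 0, 0, 0, 0, 0, 0, 0;
     qr * (qr - 2), (qr - 1) ^ 2, 0, 0, 0, 0, 0, 0;
     qr + 1, 0, qr ^ 2, 0, 0, 0, 0, 0;
     0, qr ^ 2 - qr + 1, qr * (qr - 2), qr ^ 2 * (qr - 1), qr * (qr - 2), qr ^ 2 * (qr - 2),
       qr * (qr - 2) * (qr - 1), qr ^ 2 * (qr - 2) * (qr - 1);
     0, 0, 0, 0, qr ^ 2, 0, 0, 0;
     qr * (qr - 2), qr * (qr - 2), 0, 0, qr * (qr - 2) * (qr - 1),
       qr * (qr ^ 2 - 2 * qr + 2), 0, 0;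
     0, 0, 0, 0, 0, 0, qr ^ 2, 0;
     0, qr * (qr - 2), qr * (qr - 2), qr ^ 2 * (qr - 2), 0, qr * (qr - 2) * (qr - 1),
       qr * (qr - 2) * (qr - 1), qr ^ 2 * (qr ^ 2 - 3 * qr + 3)]

/-- The diagonal matrix of eigenvalues. -/
noncomputable def D8 : Matrix (Fin 8) (Fin 8) (RatFunc ℚ) :=
  Matrix.diagonal ![1, qr ^ 2, qr ^ 2, qr ^ 2, qr ^ 2, (qr - 1) ^ 2,
    qr * (qr ^ 2 - 2 * qr + 2), qr ^ 2 * (qr - 1) ^ 2]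

/-- The matrix of eigenvectors from the paper. -/
noncomputable def P8 : Matrix (Fin 8) (Fin 8) (RatFunc ℚ) :=
  !![qr - 1, 0, 0, 0, 0, 0, 0, 0;
     1 - qr, 0, 0, 0, 0, (qr - 1) * (qr ^ 3 - 3 * qr ^ 2 + 4 * qr - 1), 0, 0;
     -1, -qr, 1 - qr, 1 - qr, -qr * (qr - 1), 0, 0, 0;
     1, 1, 0, 0, 0, -(qr ^ 3 - 3 * qr ^ 2 + 4 * qr - 1), 0, 1;
     0, 0, -1, 0, 0, 0, 0, 0;
     0, 0, 1, 0, 0, -qr * (qr - 1) * (qr - 2), 1 - qr, 0;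
     0, 0, 0, 1, 0, 0, 0, 0;
     0, 0, 0, 0, 1, qr * (qr - 2), 1, 1]

open Matrix in
@[simp] lemma aux_cons_val_five {α : Type*} {m : ℕ} (x : α) (u : Fin (m+5) → α) :
    vecCons x u 5 = vecHead (vecTail (vecTail (vecTail (vecTail u)))) := rfl
open Matrix in
@[simp] lemma aux_cons_val_six {α : Type*} {m : ℕ} (x : α) (u : Fin (m+6) → α) :
    vecCons x u 6 = vecHead (vecTail (vecTail (vecTail (vecTail (vecTail u))))) := rfl
open Matrix in
@[simp] lemma aux_cons_val_seven {α : Type*} {m : ℕ} (x : α) (u : Fin (m+7) → α) :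
    vecCons x u 7 = vecHead (vecTail (vecTail (vecTail (vecTail (vecTail (vecTail u)))))) := rfl

set_option maxHeartbeats 4000000 in
theorem aux_mul_fin_eight {α : Type*} [AddCommMonoid α] [Mul α] (a11 a12 a13 a14 a15 a16 a17 a18 a21 a22 a23 a24 a25 a26 a27 a28 a31 a32 a33 a34 a35 a36 a37 a38 a41 a42 a43 a44 a45 a46 a47 a48 a51 a52 a53 a54 a55 a56 a57 a58 a61 a62 a63 a64 a65 a66 a67 a68 a71 a72 a73 a74 a75 a76 a77 a78 a81 a82 a83 a84 a85 a86 a87 a88 b11 b12 b13 b14 b15 b16 b17 b18 b21 b22 b23 b24 b25 b26 b27 b28 b31 b32 b33 b34 b35 b36 b37 b38 b41 b42 b43 b44 b45 b46 b47 b48 b51 b52 b53 b54 b55 b56 b57 b58 b61 b62 b63 b64 b65 b66 b67 b68 b71 b72 b73 b74 b75 b76 b77 b78 b81 b82 b83 b84 b85 b86 b87 b88 : α) :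
    !![a11, a12, a13, a14, a15, a16, a17, a18;
     a21, a22, a23, a24, a25, a26, a27, a28;
     a31, a32, a33, a34, a35, a36, a37, a38;
     a41, a42, a43, a44, a45, a46, a47, a48;
     a51, a52, a53, a54, a55, a56, a57, a58;
     a61, a62, a63, a64, a65, a66, a67, a68;
     a71, a72, a73, a74, a75, a76, a77, a78;
     a81, a82, a83, a84, a85, a86, a87, a88] * !![b11, b12, b13, b14, b15, b16, b17, b18;
     b21, b22, b23, b24, b25, b26, b27, b28;
     b31, b32, b33, b34, b35, b36, b37, b38;
     b41, b42, b43, b44, b45, b46, b47, b48;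
     b51, b52, b53, b54, b55, b56, b57, b58;
     b61, b62, b63, b64, b65, b66, b67, b68;
     b71, b72, b73, b74, b75, b76, b77, b78;
     b81, b82, b83, b84, b85, b86, b87, b88] =
    !![a11*b11+a12*b21+a13*b31+a14*b41+a15*b51+a16*b61+a17*b71+a18*b81, a11*b12+a12*b22+a13*b32+a14*b42+a15*b52+a16*b62+a17*b72+a18*b82, a11*b13+a12*b23+a13*b33+a14*b43+a15*b53+a16*b63+a17*b73+a18*b83, a11*b14+a12*b24+a13*b34+a14*b44+a15*b54+a16*b64+a17*b74+a18*b84, a11*b15+a12*b25+a13*b35+a14*b45+a15*b55+a16*b65+a17*b75+a18*b85, a11*b16+a12*b26+a13*b36+a14*b46+a15*b56+a16*b66+a17*b76+a18*b86, a11*b17+a12*b27+a13*b37+a14*b47+a15*b57+a16*b67+a17*b77+a18*b87, a11*b18+a12*b28+a13*b38+a14*b48+a15*b58+a16*b68+a17*b78+a18*b88;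
     a21*b11+a22*b21+a23*b31+a24*b41+a25*b51+a26*b61+a27*b71+a28*b81, a21*b12+a22*b22+a23*b32+a24*b42+a25*b52+a26*b62+a27*b72+a28*b82, a21*b13+a22*b23+a23*b33+a24*b43+a25*b53+a26*b63+a27*b73+a28*b83, a21*b14+a22*b24+a23*b34+a24*b44+a25*b54+a26*b64+a27*b74+a28*b84, a21*b15+a22*b25+a23*b35+a24*b45+a25*b55+a26*b65+a27*b75+a28*b85, a21*b16+a22*b26+a23*b36+a24*b46+a25*b56+a26*b66+a27*b76+a28*b86, a21*b17+a22*b27+a23*b37+a24*b47+a25*b57+a26*b67+a27*b77+a28*b87, a21*b18+a22*b28+a23*b38+a24*b48+a25*b58+a26*b68+a27*b78+a28*b88;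
     a31*b11+a32*b21+a33*b31+a34*b41+a35*b51+a36*b61+a37*b71+a38*b81, a31*b12+a32*b22+a33*b32+a34*b42+a35*b52+a36*b62+a37*b72+a38*b82, a31*b13+a32*b23+a33*b33+a34*b43+a35*b53+a36*b63+a37*b73+a38*b83, a31*b14+a32*b24+a33*b34+a34*b44+a35*b54+a36*b64+a37*b74+a38*b84, a31*b15+a32*b25+a33*b35+a34*b45+a35*b55+a36*b65+a37*b75+a38*b85, a31*b16+a32*b26+a33*b36+a34*b46+a35*b56+a36*b66+a37*b76+a38*b86, a31*b17+a32*b27+a33*b37+a34*b47+a35*b57+a36*b67+a37*b77+a38*b87, a31*b18+a32*b28+a33*b38+a34*b48+a35*b58+a36*b68+a37*b78+a38*b88;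
     a41*b11+a42*b21+a43*b31+a44*b41+a45*b51+a46*b61+a47*b71+a48*b81, a41*b12+a42*b22+a43*b32+a44*b42+a45*b52+a46*b62+a47*b72+a48*b82, a41*b13+a42*b23+a43*b33+a44*b43+a45*b53+a46*b63+a47*b73+a48*b83, a41*b14+a42*b24+a43*b34+a44*b44+a45*b54+a46*b64+a47*b74+a48*b84, a41*b15+a42*b25+a43*b35+a44*b45+a45*b55+a46*b65+a47*b75+a48*b85, a41*b16+a42*b26+a43*b36+a44*b46+a45*b56+a46*b66+a47*b76+a48*b86, a41*b17+a42*b27+a43*b37+a44*b47+a45*b57+a46*b67+a47*b77+a48*b87, a41*b18+a42*b28+a43*b38+a44*b48+a45*b58+a46*b68+a47*b78+a48*b88;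
     a51*b11+a52*b21+a53*b31+a54*b41+a55*b51+a56*b61+a57*b71+a58*b81, a51*b12+a52*b22+a53*b32+a54*b42+a55*b52+a56*b62+a57*b72+a58*b82, a51*b13+a52*b23+a53*b33+a54*b43+a55*b53+a56*b63+a57*b73+a58*b83, a51*b14+a52*b24+a53*b34+a54*b44+a55*b54+a56*b64+a57*b74+a58*b84, a51*b15+a52*b25+a53*b35+a54*b45+a55*b55+a56*b65+a57*b75+a58*b85, a51*b16+a52*b26+a53*b36+a54*b46+a55*b56+a56*b66+a57*b76+a58*b86, a51*b17+a52*b27+a53*b37+a54*b47+a55*b57+a56*b67+a57*b77+a58*b87, a51*b18+a52*b28+a53*b38+a54*b48+a55*b58+a56*b68+a57*b78+a58*b88;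
     a61*b11+a62*b21+a63*b31+a64*b41+a65*b51+a66*b61+a67*b71+a68*b81, a61*b12+a62*b22+a63*b32+a64*b42+a65*b52+a66*b62+a67*b72+a68*b82, a61*b13+a62*b23+a63*b33+a64*b43+a65*b53+a66*b63+a67*b73+a68*b83, a61*b14+a62*b24+a63*b34+a64*b44+a65*b54+a66*b64+a67*b74+a68*b84, a61*b15+a62*b25+a63*b35+a64*b45+a65*b55+a66*b65+a67*b75+a68*b85, a61*b16+a62*b26+a63*b36+a64*b46+a65*b56+a66*b66+a67*b76+a68*b86, a61*b17+a62*b27+a63*b37+a64*b47+a65*b57+a66*b67+a67*b77+a68*b87, a61*b18+a62*b28+a63*b38+a64*b48+a65*b58+a66*b68+a67*b78+a68*b88;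
     a71*b11+a72*b21+a73*b31+a74*b41+a75*b51+a76*b61+a77*b71+a78*b81, a71*b12+a72*b22+a73*b32+a74*b42+a75*b52+a76*b62+a77*b72+a78*b82, a71*b13+a72*b23+a73*b33+a74*b43+a75*b53+a76*b63+a77*b73+a78*b83, a71*b14+a72*b24+a73*b34+a74*b44+a75*b54+a76*b64+a77*b74+a78*b84, a71*b15+a72*b25+a73*b35+a74*b45+a75*b55+a76*b65+a77*b75+a78*b85, a71*b16+a72*b26+a73*b36+a74*b46+a75*b56+a76*b66+a77*b76+a78*b86, a71*b17+a72*b27+a73*b37+a74*b47+a75*b57+a76*b67+a77*b77+a78*b87, a71*b18+a72*b28+a73*b38+a74*b48+a75*b58+a76*b68+a77*b78+a78*b88;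
     a81*b11+a82*b21+a83*b31+a84*b41+a85*b51+a86*b61+a87*b71+a88*b81, a81*b12+a82*b22+a83*b32+a84*b42+a85*b52+a86*b62+a87*b72+a88*b82, a81*b13+a82*b23+a83*b33+a84*b43+a85*b53+a86*b63+a87*b73+a88*b83, a81*b14+a82*b24+a83*b34+a84*b44+a85*b54+a86*b64+a87*b74+a88*b84, a81*b15+a82*b25+a83*b35+a84*b45+a85*b55+a86*b65+a87*b75+a88*b85, a81*b16+a82*b26+a83*b36+a84*b46+a85*b56+a86*b66+a87*b76+a88*b86, a81*b17+a82*b27+a83*b37+a84*b47+a85*b57+a86*b67+a87*b77+a88*b87, a81*b18+a82*b28+a83*b38+a84*b48+a85*b58+a86*b68+a87*b78+a88*b88] := by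
  ext i j
  fin_cases i <;> fin_cases j <;>
    simp [Matrix.mul_apply, Fin.sum_univ_succ, ← add_assoc]

set_option maxHeartbeats 1000000 in
theorem aux_one_fin_eight {α : Type*} [Zero α] [One α] :
    (1 : Matrix (Fin 8) (Fin 8) α) =
    !![1,0,0,0,0,0,0,0;0,1,0,0,0,0,0,0;0,0,1,0,0,0,0,0;0,0,0,1,0,0,0,0;0,0,0,0,1,0,0,0;0,0,0,0,0,1,0,0;0,0,0,0,0,0,1,0;0,0,0,0,0,0,0,1] := by
  ext i j
  fin_cases i <;> fin_cases j <;> rfl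


lemma aux_hq0 : qr ≠ 0 := RatFunc.X_ne_zero

lemma aux_hq1 : qr - 1 ≠ 0 := by
  have h : qr - 1 = algebraMap (Polynomial ℚ) (RatFunc ℚ) (Polynomial.X - 1) := by
    simp [qr, map_sub, RatFunc.algebraMap_X]
  rw [h]
  refine RatFunc.algebraMap_ne_zero ?_
  intro h2
  have := congrArg (fun p => Polynomial.coeff p 1) h2
  simp [Polynomial.coeff_one] at this

lemma aux_hq3 : qr ^ 3 - 3 * qr ^ 2 + 4 * qr - 1 ≠ 0 := by
  have h : qr ^ 3 - 3 * qr ^ 2 + 4 * qr - 1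
      = algebraMap (Polynomial ℚ) (RatFunc ℚ)
        (Polynomial.X ^ 3 - 3 * Polynomial.X ^ 2 + 4 * Polynomial.X - 1) := by
    simp [qr, map_sub, map_add, map_mul, map_pow, map_ofNat, RatFunc.algebraMap_X]
  rw [h]
  refine RatFunc.algebraMap_ne_zero ?_
  intro h2
  have := congrArg (fun p => Polynomial.coeff p 3) h2
  simp [Polynomial.coeff_one, Polynomial.coeff_X] at this

/-- Explicit inverse of `P8`. -/
noncomputable def Q8 : Matrix (Fin 8) (Fin 8) (RatFunc ℚ) :=
  !![1/(qr-1), 0, 0, 0, 0, 0, 0, 0;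
     -1/(qr^2*(qr-1)), 1/qr, -1/qr^2, (qr-1)/qr, -1/qr^2, -1/qr, (1-qr)/qr^2, (1-qr)/qr;
     0, 0, 0, 0, -1, 0, 0, 0;
     0, 0, 0, 0, 0, 0, 1, 0;
     -1/(qr^2*(qr-1)), -1/(qr*(qr-1)), -1/qr^2, -1/qr,
       (qr^2-qr+1)/(qr^2*(qr-1)), 1/(qr*(qr-1)), (1-qr)/qr^2, 1/qr;
     1/((qr-1)*(qr^3-3*qr^2+4*qr-1)), 1/((qr-1)*(qr^3-3*qr^2+4*qr-1)), 0, 0, 0, 0, 0, 0;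
     (2*qr-qr^2)/((qr-1)*(qr^3-3*qr^2+4*qr-1)), (2*qr-qr^2)/((qr-1)*(qr^3-3*qr^2+4*qr-1)),
       0, 0, -1/(qr-1), -1/(qr-1), 0, 0;
     1/(qr^2*(qr-1)), 1/(qr*(qr-1)), 1/qr^2, 1/qr, 1/qr^2, 1/qr, (qr-1)/qr^2, (qr-1)/qr]

/-- Explicit form of `D8`. -/
lemma aux_D8_eq : D8 =
    !![1,0,0,0,0,0,0,0;
       0,qr^2,0,0,0,0,0,0;
       0,0,qr^2,0,0,0,0,0;
       0,0,0,qr^2,0,0,0,0;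
       0,0,0,0,qr^2,0,0,0;
       0,0,0,0,0,(qr-1)^2,0,0;
       0,0,0,0,0,0,qr*(qr^2-2*qr+2),0;
       0,0,0,0,0,0,0,qr^2*(qr-1)^2] := by
  ext i j
  fin_cases i <;> fin_cases j <;> rfl

set_option maxHeartbeats 4000000 in
lemma aux_key : M8 * P8 = P8 * D8 := by
  rw [aux_D8_eq]
  simp only [M8, P8]
  rw [aux_mul_fin_eight, aux_mul_fin_eight]
  refine congrArg Matrix.of ?_
  simp only [Matrix.vecCons, Fin.cons_inj]
  and_intros <;> first | trivial | ring1

set_option maxHeartbeats 4000000 in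
lemma aux_PQ : P8 * Q8 = 1 := by
  rw [aux_one_fin_eight]
  simp only [P8, Q8]
  rw [aux_mul_fin_eight]
  have h0 := aux_hq0
  have h1 := aux_hq1
  have h3 := aux_hq3
  have h3' : qr * (qr * (qr - 3) + 4) - 1 ≠ 0 := by convert h3 using 1; ring
  refine congrArg Matrix.of ?_
  simp only [Matrix.vecCons, Fin.cons_inj]
  and_intros <;> first | trivial | ring1 | (field_simp; try ring1)

/-- `M8 = P8 · D8 · P8⁻¹`, with `P8` invertible. -/
theorem stmt7 : P8.det ≠ 0 ∧ M8 = P8 * D8 * P8⁻¹ := by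
  have hdet : IsUnit P8.det := Matrix.isUnit_det_of_right_inverse aux_PQ
  refine ⟨hdet.ne_zero, ?_⟩
  have hinv : P8 * P8⁻¹ = 1 := Matrix.mul_nonsing_inv _ hdet
  calc M8 = M8 * (P8 * P8⁻¹) := by rw [hinv, Matrix.mul_one]
    _ = (M8 * P8) * P8⁻¹ := by rw [Matrix.mul_assoc]
    _ = (P8 * D8) * P8⁻¹ := by rw [aux_key]
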